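/- Let Z be a real random variable whose law P_Z has a density μ bounded above by μ_∞ < ∞ with respect to Lebesgue measure, and let h_m be the deterministic bandwidth for parameters s, L, σ₁ > 0. Then uniformly for z ∈ supp P_Z, h_m(z) ≥ D₂ m^{−1/(1 + 2s)}, where D₂ = (σ₁/L)^{2/(1+2s)} (2 μ_∞)^{−1/(2s+1)}. -/
import Mathlib


open MeasureTheory Set

/-- If the law `P_Z` has a density `μ ≤ μ_∞ < ∞` with respect to Lebesgue measure, then the
deterministic bandwidth `h_m`, defined pointwise by
`L h_m(z)^s = σ₁ (m P_Z[I(z, h_m(z))])^{−1/2}`, satisfies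
`h_m(z) ≥ D₂ m^{−1/(1+2s)}` with `D₂ = (σ₁/L)^{2/(1+2s)} (2 μ_∞)^{−1/(2s+1)}`. -/
theorem deterministic_bandwidth_lower_bound
    (PZ : Measure ℝ) [IsProbabilityMeasure PZ] (μ : ℝ → ℝ) (μinf s L σ₁ : ℝ)
    (hs : 0 < s) (hL : 0 < L) (hσ₁ : 0 < σ₁) (hμ0 : ∀ z, 0 ≤ μ z)
    (hdens : PZ = MeasureTheory.volume.withDensity fun z => ENNReal.ofReal (μ z))
    (hμb : ∀ z, μ z ≤ μinf) (hμinf : 0 < μinf)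
    (m : ℕ) (hm0 : 0 < m) (hm : ℝ → ℝ) (z : ℝ) (hz : 0 < hm z)
    (heq : L * hm z ^ s
      = σ₁ / Real.sqrt (m * (PZ (Icc (z - hm z) (z + hm z))).toReal)) :
    (σ₁ / L) ^ (2 / (1 + 2 * s)) * (2 * μinf) ^ (-(1 / (2 * s + 1)))
      * (m : ℝ) ^ (-(1 / (1 + 2 * s))) ≤ hm z := by
  set h := hm z with hh
  set P := (PZ (Icc (z - h) (z + h))).toReal with hPdef
  have hPnn : 0 ≤ P := ENNReal.toReal_nonneg
  have hmR : (0:ℝ) < m := Nat.cast_pos.mpr hm0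
  have hhs : 0 < h ^ s := Real.rpow_pos_of_pos hz s
  have hPpos : 0 < P := by
    rcases hPnn.lt_or_eq with h' | h'
    · exact h'
    · exfalso
      have h0 : Real.sqrt (↑m * P) = 0 := by rw [← h']; simp
      rw [h0, div_zero] at heq
      exact (mul_pos hL hhs).ne' heq
  -- bound P ≤ μinf * (2h)
  have hvol : PZ (Icc (z - h) (z + h)) ≤ ENNReal.ofReal (μinf * (2 * h)) := by
    rw [hdens, withDensity_apply _ measurableSet_Icc]
    calc ∫⁻ x in Icc (z - h) (z + h), ENNReal.ofReal (μ x) ∂volume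
        ≤ ∫⁻ _ in Icc (z - h) (z + h), ENNReal.ofReal μinf ∂volume :=
          lintegral_mono fun x => ENNReal.ofReal_le_ofReal (hμb x)
      _ = ENNReal.ofReal μinf * volume (Icc (z - h) (z + h)) := by
          simp [lintegral_const, Measure.restrict_apply, mul_comm]
      _ = ENNReal.ofReal (μinf * (2 * h)) := by
          rw [Real.volume_Icc, ENNReal.ofReal_mul hμinf.le]
          congr 1
          ring
  have hPle : P ≤ μinf * (2 * h) :=
    ENNReal.toReal_le_of_le_ofReal (by positivity) hvol
  -- square form
  have hsqpos : 0 < Real.sqrt (↑m * P) := Real.sqrt_pos.mpr (by positivity)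
  have hσeq : L * h ^ s * Real.sqrt (↑m * P) = σ₁ := by
    rw [eq_div_iff hsqpos.ne'] at heq
    exact heq
  have hsq : σ₁ ^ 2 = L ^ 2 * (h ^ s) ^ 2 * (↑m * P) := by
    have h2 : Real.sqrt (↑m * P) ^ 2 = ↑m * P := Real.sq_sqrt (by positivity)
    rw [← hσeq]
    rw [mul_pow, mul_pow, h2]
  have key : σ₁ ^ 2 / (L ^ 2 * (2 * μinf) * ↑m) ≤ h ^ (2 * s + 1) := by
    have h1 : σ₁ ^ 2 ≤ L ^ 2 * (2 * μinf) * ↑m * ((h ^ s) ^ 2 * h) := by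
      rw [hsq]
      have := mul_le_mul_of_nonneg_left hPle
        (by positivity : (0:ℝ) ≤ L ^ 2 * (h ^ s) ^ 2 * ↑m)
      nlinarith [this]
    have h2 : (h ^ s) ^ 2 * h = h ^ (2 * s + 1) := by
      rw [← Real.rpow_natCast (h ^ s) 2, ← Real.rpow_mul hz.le,
        Real.rpow_add hz, Real.rpow_one]
      norm_num [mul_comm]
    rw [← h2, div_le_iff₀ (by positivity)]
    nlinarith [h1]
  -- take rpow (1/(2s+1)) of both sides
  have hApos : 0 < σ₁ ^ 2 / (L ^ 2 * (2 * μinf) * ↑m) := by positivity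
  have hepos : (0:ℝ) < 1 / (2 * s + 1) := by positivity
  have main := Real.rpow_le_rpow hApos.le key hepos.le
  have hrhs : (h ^ (2 * s + 1)) ^ (1 / (2 * s + 1)) = h := by
    rw [← Real.rpow_mul hz.le, mul_one_div, div_self (by positivity), Real.rpow_one]
  rw [hrhs] at main
  refine le_trans (le_of_eq ?_) main
  -- identify LHS with A^(1/(2s+1))
  have h12 : (1 + 2 * s) = 2 * s + 1 := by ring
  rw [h12]
  have step : σ₁ ^ 2 / (L ^ 2 * (2 * μinf) * ↑m)
      = (σ₁ / L) ^ (2:ℕ) * ((2 * μinf)⁻¹ * (↑m:ℝ)⁻¹) := by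
    field_simp
  rw [step]
  rw [Real.mul_rpow (by positivity : (0:ℝ) ≤ (σ₁/L)^(2:ℕ)) (by positivity),
    Real.mul_rpow (by positivity : (0:ℝ) ≤ (2*μinf)⁻¹) (by positivity),
    Real.inv_rpow (by positivity : (0:ℝ) ≤ 2*μinf),
    Real.inv_rpow hmR.le,
    ← Real.rpow_neg (by positivity : (0:ℝ) ≤ 2*μinf),
    ← Real.rpow_neg hmR.le,
    ← Real.rpow_natCast (σ₁ / L) 2,
    ← Real.rpow_mul (by positivity : (0:ℝ) ≤ σ₁ / L)]
  norm_num [mul_one_div]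
  rw [show (2:ℝ)/(2*s+1) = 2*(2*s+1)⁻¹ from by ring, mul_assoc]
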